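/- arXiv:hep-th/9407145 — 2 statements merged into one kernel-verified Lean document; each statement's English description precedes it below -/
import Mathlib

section
/- Let P(B,A) be a quantum principal bundle. Vertical automorphisms of P (left B-module automorphisms F : P → P with F(1) = 1 and Δ_R ∘ F = (F ⊗ id) ∘ Δ_R) are in bijective correspondence with convolution invertible linear maps f : A → P satisfying f(1) = 1 and Δ_R ∘ f = (f ⊗ id) ∘ Ad, where Ad(a) = a₂ ⊗ S(a₁)a₃. The correspondence is f ↦ id * f (u ↦ u⁽¹⁾ f(u⁽²⁾)) with inverse F ↦ mult ∘ (id ⊗_B F) ∘ τ. -/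
open TensorProduct

noncomputable section

variable (k : Type*) [Field k]

/-- Convolution product of linear maps from a coalgebra to an algebra:
`(f * g)(a) = f(a₁) g(a₂)`. -/
def conv {C B : Type*} [AddCommMonoid C] [Module k C] [Coalgebra k C]
    [Semiring B] [Algebra k B] (f g : C →ₗ[k] B) : C →ₗ[k] B :=
  LinearMap.mul' k B ∘ₗ TensorProduct.map f g ∘ₗ Coalgebra.comul

/-- The convolution unit `a ↦ ε(a) 1`. -/
def convOne {C B : Type*} [AddCommMonoid C] [Module k C] [Coalgebra k C]
    [Semiring B] [Algebra k B] : C →ₗ[k] B :=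
  Algebra.linearMap k B ∘ₗ Coalgebra.counit

variable (A P : Type*) [Ring A] [HopfAlgebra k A] [Ring P] [Algebra k P]

/-- The canonical map `χ : P ⊗ P → P ⊗ A`, `u ⊗ v ↦ u v⁽¹⁾ ⊗ v⁽²⁾`,
i.e. `χ = (mult ⊗ id) ∘ (id ⊗ Δ_R)`. -/
def chiMap (ΔR : P →ₗ[k] P ⊗[k] A) : P ⊗[k] P →ₗ[k] P ⊗[k] A :=
  TensorProduct.map (LinearMap.mul' k P) LinearMap.id ∘ₗ
    (TensorProduct.assoc k P P A).symm.toLinearMap ∘ₗ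
    TensorProduct.map LinearMap.id ΔR

/-- The right adjoint coaction `Ad(a) = a₂ ⊗ S(a₁)a₃`. -/
def adCoaction : A →ₗ[k] A ⊗[k] A :=
  TensorProduct.map LinearMap.id (LinearMap.mul' k A) ∘ₗ
    (TensorProduct.leftComm k A A A).toLinearMap ∘ₗ
    TensorProduct.map (HopfAlgebra.antipode (R := k)) LinearMap.id ∘ₗ
    TensorProduct.map LinearMap.id Coalgebra.comul ∘ₗ Coalgebra.comul

/-- The kernel of `P ⊗ P → P ⊗_B P`: the span of elements `u b ⊗ v - u ⊗ b v`
with `b` a coinvariant (`Δ_R b = b ⊗ 1`), so that `P ⊗_B P = (P ⊗ P) ⧸ relSub`. -/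
def relSub (ΔR : P →ₗ[k] P ⊗[k] A) : Submodule k (P ⊗[k] P) :=
  Submodule.span k {x | ∃ u v b : P, ΔR b = b ⊗ₜ 1 ∧ x = (u * b) ⊗ₜ v - u ⊗ₜ (b * v)}

/-- The image of `B ⊗ B` in `P ⊗ P`, where `B = Pᴬ` is the coinvariant subalgebra. -/
def BBsub (ΔR : P →ₗ[k] P ⊗[k] A) : Submodule k (P ⊗[k] P) :=
  Submodule.span k {x | ∃ b c : P, ΔR b = b ⊗ₜ 1 ∧ ΔR c = c ⊗ₜ 1 ∧ x = b ⊗ₜ c}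

/-- The submodule `P B² P ⊆ P ⊗ P`, where `B² = ker(mult : B ⊗ B → B)`. -/
def PB2P (ΔR : P →ₗ[k] P ⊗[k] A) : Submodule k (P ⊗[k] P) :=
  Submodule.span k {w | ∃ u v : P, ∃ x ∈ BBsub k A P ΔR ⊓ LinearMap.ker (LinearMap.mul' k P),
    w = TensorProduct.map (LinearMap.mulLeft k u) (LinearMap.mulRight k v) x}

/-!
In the convolution algebra `Hom(A, P ⊗ A)` let `ι(a) = 1 ⊗ a` and `f̂(a) = f(a) ⊗ 1`. Then `ι` is
invertible with inverse `1 ⊗ S(-)` and `(f ⊗ id) ∘ Ad = ι⁻¹ * f̂ * ι`, so `f` is `Ad`-covariant iff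
`ι * (Δ_R ∘ f) = f̂ * ι`. On `Δ_R(u)` the left `P`-linear extensions of these two maps give
`Δ_R((id * f)(u))` and `((id * f) ⊗ id)(Δ_R u)`; as `χ` is surjective, `Δ_R(P)` generates `P ⊗ A`
as a left `P`-module, so `f` is `Ad`-covariant iff `id * f` intertwines `Δ_R`.

For a left `B`-linear `F`, the map `u ⊗ v ↦ u F(v)` vanishes on `P B² P = ker χ`, so it factors
through `χ`; since `χ(σ a) = 1 ⊗ a`, this gives `id * Ψ(F) = F` for `Ψ(F) = mult ∘ (id ⊗_B F) ∘ τ`,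
while `Ψ(id * f) = f` because `u ⊗ v ↦ u (id * f)(v)` is `μ ∘ (id ⊗ f) ∘ χ`. Finally
`id * (ψ * φ) = (id * φ) ∘ (id * ψ)` whenever `id * ψ` intertwines `Δ_R`, so convolution inverses
correspond to inverse automorphisms.
-/

namespace QuantumPrincipalBundle

open Coalgebra LinearMap WithConv Algebra.TensorProduct

section Convolution

variable {k} {C B B' : Type*} [AddCommMonoid C] [Module k C] [Coalgebra k C]
  [Semiring B] [Algebra k B] [Semiring B'] [Algebra k B']

lemma conv_eq_convOne_iff {f g : C →ₗ[k] B} :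
    conv k f g = convOne k ↔ toConv f * toConv g = 1 :=
  WithConv.ext_iff.symm

def postcompConv (h : B →ₐ[k] B') : WithConv (C →ₗ[k] B) →* WithConv (C →ₗ[k] B') where
  toFun f := toConv (h.toLinearMap ∘ₗ f.ofConv)
  map_one' := by ext; simp
  map_mul' f g := congrArg toConv (algHom_comp_convMul_distrib h f g)

end Convolution

section AdCoaction

def includeRightConvUnit : (WithConv (A →ₗ[k] P ⊗[k] A))ˣ :=
  Units.map (postcompConv includeRight)
    ⟨toConv LinearMap.id, toConv (HopfAlgebra.antipode k), id_mul_antipode, antipode_mul_id⟩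

@[simp] lemma coe_includeRightConvUnit :
    ↑(includeRightConvUnit k A P) = toConv (includeRight : A →ₐ[k] P ⊗[k] A).toLinearMap := rfl

variable {k A P}

lemma adCoaction_eq_conv (f : A →ₗ[k] P) :
    toConv (TensorProduct.map f LinearMap.id ∘ₗ adCoaction k A)
      = (↑(includeRightConvUnit k A P)⁻¹ : WithConv (A →ₗ[k] P ⊗[k] A))
        * toConv (includeLeft.toLinearMap ∘ₗ f)
        * (includeRightConvUnit k A P : WithConv (A →ₗ[k] P ⊗[k] A)) := by
  apply WithConv.ext
  have hL : TensorProduct.map f LinearMap.id ∘ₗ TensorProduct.map LinearMap.id (mul' k A) ∘ₗ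
        (TensorProduct.leftComm k A A A).toLinearMap ∘ₗ
        TensorProduct.map (HopfAlgebra.antipode k) LinearMap.id
      = (mul' k (P ⊗[k] A) ∘ₗ rTensor _ (mul' k (P ⊗[k] A)) ∘ₗ
          TensorProduct.map (TensorProduct.map
            ((includeRight : A →ₐ[k] P ⊗[k] A).toLinearMap ∘ₗ HopfAlgebra.antipode k)
            (includeLeft.toLinearMap ∘ₗ f)) includeRight.toLinearMap) ∘ₗ
          (TensorProduct.assoc k A A A).symm.toLinearMap := by
    ext x y z
    simp
  calc _ = (TensorProduct.map f LinearMap.id ∘ₗ TensorProduct.map LinearMap.id (mul' k A) ∘ₗ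
        (TensorProduct.leftComm k A A A).toLinearMap ∘ₗ
        TensorProduct.map (HopfAlgebra.antipode k) LinearMap.id) ∘ₗ lTensor A comul ∘ₗ comul := by
          simp only [adCoaction, LinearMap.comp_assoc]; rfl
    _ = _ := by
      rw [hL, LinearMap.comp_assoc, coassoc_symm]
      simp only [← LinearMap.comp_assoc, rTensor_comp_map]
      rw [LinearMap.comp_assoc (rTensor A comul), LinearMap.map_comp_rTensor]
      rfl

end AdCoaction

section MulExtend

variable {k} {S M N R R' : Type*} [Semiring S] [Algebra k S] [AddCommMonoid M] [Module k M]
  [AddCommMonoid N] [Module k N] [Semiring R] [Algebra k R] [Semiring R'] [Algebra k R']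

def mulExtend (j : S →ₐ[k] R) (K : M →ₗ[k] R) : S ⊗[k] M →ₗ[k] R :=
  mul' k R ∘ₗ TensorProduct.map j.toLinearMap K

@[simp] lemma mulExtend_tmul (j : S →ₐ[k] R) (K : M →ₗ[k] R) (s : S) (m : M) :
    mulExtend j K (s ⊗ₜ m) = j s * K m := rfl

lemma mulExtend_tmul_one_mul {M : Type*} [Semiring M] [Algebra k M] (j : S →ₐ[k] R)
    (K : M →ₗ[k] R) (s : S) (t : S ⊗[k] M) :
    mulExtend j K ((s ⊗ₜ 1) * t) = j s * mulExtend j K t := by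
  induction t with
  | zero => simp
  | tmul s' m => simp [mul_assoc]
  | add x y hx hy => simp only [mul_add, map_add, hx, hy]

lemma comp_mulExtend_includeLeft {M : Type*} [Semiring M] [Algebra k M]
    (L : S ⊗[k] M →ₗ[k] R) (j : S →ₐ[k] R) (hL : ∀ s t, L ((s ⊗ₜ 1) * t) = j s * L t)
    (K : N →ₗ[k] S ⊗[k] M) :
    L ∘ₗ mulExtend includeLeft K = mulExtend j (L ∘ₗ K) := by
  ext s n
  simp [hL]

lemma comp_mulExtend (h : R →ₐ[k] R') (j : S →ₐ[k] R) (K : M →ₗ[k] R) :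
    h.toLinearMap ∘ₗ mulExtend j K = mulExtend (h.comp j) (h.toLinearMap ∘ₗ K) :=
  TensorProduct.ext' fun s m => by simp

lemma mulExtend_includeLeft_includeRight {M : Type*} [Semiring M] [Algebra k M] :
    mulExtend (includeLeft : S →ₐ[k] S ⊗[k] M) includeRight.toLinearMap = LinearMap.id :=
  TensorProduct.ext' fun s m => by simp

lemma mulExtend_convMul {C : Type*} [AddCommMonoid C] [Module k C] [Coalgebra k C]
    (j : S →ₐ[k] R) (K₁ K₂ : C →ₗ[k] R) :
    mulExtend j (toConv K₁ * toConv K₂).ofConv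
      = mul' k R ∘ₗ TensorProduct.map (mulExtend j K₁) K₂ ∘ₗ
          (TensorProduct.assoc k S C C).symm.toLinearMap ∘ₗ lTensor S comul := by
  refine TensorProduct.ext' fun s c => ?_
  simp only [mulExtend_tmul, convMul_apply, coe_comp, Function.comp_apply, lTensor_tmul,
    LinearEquiv.coe_coe]
  rw [← (ℛ k c).eq]
  simp [Finset.mul_sum, tmul_sum, mul_assoc]

end MulExtend

section Coaction

variable {k A P} (ΔR : P →ₗ[k] P ⊗[k] A)

def IsCounital : Prop :=
  ∀ u : P, TensorProduct.map LinearMap.id Coalgebra.counit (ΔR u) = u ⊗ₜ (1 : k)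

def IsCoassociative : Prop :=
  ∀ u : P, TensorProduct.map ΔR LinearMap.id (ΔR u)
    = (TensorProduct.assoc k P A A).symm (TensorProduct.map LinearMap.id Coalgebra.comul (ΔR u))

def IsEquivariant (F : P →ₗ[k] P) : Prop :=
  ∀ u, ΔR (F u) = TensorProduct.map F LinearMap.id (ΔR u)

def IsCoinvariantLinear (F : P →ₗ[k] P) : Prop :=
  ∀ b : P, ΔR b = b ⊗ₜ 1 → ∀ u, F (b * u) = b * F u

def IsAdCovariant (f : A →ₗ[k] P) : Prop :=
  ∀ a, ΔR (f a) = TensorProduct.map f LinearMap.id (adCoaction k A a)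

/-- The paper's `id * f`, `u ↦ u⁽¹⁾ f(u⁽²⁾)`. -/
def coactConv (f : A →ₗ[k] P) : P →ₗ[k] P := mulExtend (AlgHom.id k P) f ∘ₗ ΔR

/-- The paper's `mult ∘ (id ⊗_B F) ∘ τ`, computed on a lift `σ : A → P ⊗ P` of `τ`. -/
def transConv (σ : A →ₗ[k] P ⊗[k] P) (F : P →ₗ[k] P) : A →ₗ[k] P :=
  mulExtend (AlgHom.id k P) F ∘ₗ σ

lemma chiMap_eq_mulExtend : chiMap k A P ΔR = mulExtend includeLeft ΔR := by
  refine TensorProduct.ext' fun u v => ?_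
  simp only [chiMap, coe_comp, Function.comp_apply, TensorProduct.map_tmul, id_coe, id_eq,
    LinearEquiv.coe_coe, mulExtend_tmul, includeLeft_apply]
  induction ΔR v with
  | zero => simp
  | tmul p a => simp
  | add x y hx hy => simp only [tmul_add, map_add, hx, hy, mul_add]

lemma mulExtend_convOne :
    mulExtend (AlgHom.id k P) (1 : WithConv (A →ₗ[k] P)).ofConv
      = (TensorProduct.rid k P).toLinearMap ∘ₗ TensorProduct.map LinearMap.id counit := by
  ext p a
  simp [Algebra.commutes, Algebra.smul_def]

lemma coactConv_convOne (hcounit : IsCounital ΔR) :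
    coactConv ΔR (1 : WithConv (A →ₗ[k] P)).ofConv = LinearMap.id := by
  ext u
  simp only [coactConv, mulExtend_convOne, coe_comp, LinearEquiv.coe_coe, Function.comp_apply]
  rw [hcounit u]
  simp

lemma coactConv_apply_one (hone : ΔR 1 = 1) (f : A →ₗ[k] P) : coactConv ΔR f 1 = f 1 := by
  simp [coactConv, hone, Algebra.TensorProduct.one_def]

lemma isCoinvariantLinear_coactConv (hmul : ∀ u v : P, ΔR (u * v) = ΔR u * ΔR v)
    (f : A →ₗ[k] P) : IsCoinvariantLinear ΔR (coactConv ΔR f) := by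
  intro b hb u
  simp [coactConv, hmul, hb, mulExtend_tmul_one_mul]

lemma mulExtend_convMul_coaction {R : Type*} [Semiring R] [Algebra k R]
    (hcoassoc : IsCoassociative ΔR) (j : P →ₐ[k] R) (K₁ K₂ : A →ₗ[k] R) (u : P) :
    mulExtend j (toConv K₁ * toConv K₂).ofConv (ΔR u)
      = mul' k R (TensorProduct.map (mulExtend j K₁ ∘ₗ ΔR) K₂ (ΔR u)) := by
  rw [mulExtend_convMul, coe_comp, Function.comp_apply, coe_comp, Function.comp_apply,
    coe_comp, Function.comp_apply, LinearEquiv.coe_coe, LinearMap.lTensor, ← hcoassoc u,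
    TensorProduct.map_map, LinearMap.comp_id]

lemma coactConv_comp_coactConv (hcoassoc : IsCoassociative ΔR) (φ : A →ₗ[k] P)
    {ψ : A →ₗ[k] P} (hψ : IsEquivariant ΔR (coactConv ΔR ψ)) :
    coactConv ΔR φ ∘ₗ coactConv ΔR ψ = coactConv ΔR (toConv ψ * toConv φ).ofConv := by
  have hmap : mulExtend (AlgHom.id k P) φ ∘ₗ TensorProduct.map (coactConv ΔR ψ) LinearMap.id
      = mul' k P ∘ₗ TensorProduct.map (coactConv ΔR ψ) φ :=
    TensorProduct.ext' fun p a => by simp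
  ext u
  rw [LinearMap.comp_apply, coactConv, LinearMap.comp_apply, hψ u, ← LinearMap.comp_apply, hmap]
  exact (mulExtend_convMul_coaction ΔR hcoassoc _ ψ φ u).symm

lemma isAdCovariant_iff_semiconjBy (f : A →ₗ[k] P) :
    IsAdCovariant ΔR f ↔ SemiconjBy ↑(includeRightConvUnit k A P) (toConv (ΔR ∘ₗ f))
      (toConv (includeLeft.toLinearMap ∘ₗ f)) := by
  have : IsAdCovariant ΔR f
      ↔ toConv (ΔR ∘ₗ f) = toConv (TensorProduct.map f LinearMap.id ∘ₗ adCoaction k A) := by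
    simp [IsAdCovariant, WithConv.ext_iff, LinearMap.ext_iff]
  rw [this, adCoaction_eq_conv, mul_assoc, Units.eq_inv_mul_iff_mul_eq]
  rfl

lemma isAdCovariant_of_conv_inverse (hone : ΔR 1 = 1)
    (hmul : ∀ u v : P, ΔR (u * v) = ΔR u * ΔR v) {f g : A →ₗ[k] P}
    (hfg : toConv f * toConv g = 1) (hgf : toConv g * toConv f = 1) (hf : IsAdCovariant ΔR f) :
    IsAdCovariant ΔR g := by
  let fu : (WithConv (A →ₗ[k] P))ˣ := ⟨toConv f, toConv g, hfg, hgf⟩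
  rw [isAdCovariant_iff_semiconjBy] at hf ⊢
  exact SemiconjBy.units_inv_right
    (x := Units.map (postcompConv (AlgHom.ofLinearMap ΔR hone hmul)) fu)
    (y := Units.map (postcompConv includeLeft) fu) hf

lemma coaction_coactConv (hcoassoc : IsCoassociative ΔR)
    (hmul : ∀ u v : P, ΔR (u * v) = ΔR u * ΔR v) (f : A →ₗ[k] P) (u : P) :
    ΔR (coactConv ΔR f u) = mulExtend includeLeft
      (↑(includeRightConvUnit k A P) * toConv (ΔR ∘ₗ f)).ofConv (ΔR u) := by
  have hmul' : ΔR ∘ₗ mulExtend (AlgHom.id k P) f = mul' k _ ∘ₗ TensorProduct.map ΔR (ΔR ∘ₗ f) :=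
    TensorProduct.ext' fun p a => by simp [hmul]
  rw [coe_includeRightConvUnit, mulExtend_convMul_coaction ΔR hcoassoc,
    mulExtend_includeLeft_includeRight, LinearMap.id_comp, ← LinearMap.comp_apply (mul' k _),
    ← hmul']
  rfl

lemma map_coactConv_coaction (hcoassoc : IsCoassociative ΔR) (f : A →ₗ[k] P) (u : P) :
    TensorProduct.map (coactConv ΔR f) LinearMap.id (ΔR u) = mulExtend includeLeft
      (toConv (includeLeft.toLinearMap ∘ₗ f) * ↑(includeRightConvUnit k A P)).ofConv (ΔR u) := by
  have hL : mulExtend includeLeft (includeLeft.toLinearMap ∘ₗ f)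
      = (includeLeft : P →ₐ[k] P ⊗[k] A).toLinearMap ∘ₗ mulExtend (AlgHom.id k P) f := by
    rw [comp_mulExtend]
    rfl
  have hLR (g : P →ₗ[k] P) : mul' k (P ⊗[k] A) ∘ₗ TensorProduct.map
      ((includeLeft : P →ₐ[k] P ⊗[k] A).toLinearMap ∘ₗ g) includeRight.toLinearMap
      = TensorProduct.map g LinearMap.id :=
    TensorProduct.ext' fun p a => by simp
  rw [coe_includeRightConvUnit, mulExtend_convMul_coaction ΔR hcoassoc, hL,
    LinearMap.comp_assoc, ← LinearMap.comp_apply (mul' k _), hLR]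
  rfl

lemma isEquivariant_coactConv (hcoassoc : IsCoassociative ΔR)
    (hmul : ∀ u v : P, ΔR (u * v) = ΔR u * ΔR v) {f : A →ₗ[k] P} (hf : IsAdCovariant ΔR f) :
    IsEquivariant ΔR (coactConv ΔR f) := by
  intro u
  rw [coaction_coactConv ΔR hcoassoc hmul, map_coactConv_coaction ΔR hcoassoc,
    ((isAdCovariant_iff_semiconjBy ΔR f).1 hf).eq]

lemma eq_of_mulExtend_comp_coaction (hfree : Function.Surjective (chiMap k A P ΔR))
    {K₁ K₂ : A →ₗ[k] P ⊗[k] A}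
    (h : mulExtend includeLeft K₁ ∘ₗ ΔR = mulExtend includeLeft K₂ ∘ₗ ΔR) : K₁ = K₂ := by
  have hχ (K : A →ₗ[k] P ⊗[k] A) : mulExtend includeLeft K ∘ₗ chiMap k A P ΔR
      = mulExtend includeLeft (mulExtend includeLeft K ∘ₗ ΔR) := by
    rw [chiMap_eq_mulExtend, comp_mulExtend_includeLeft _ _ (mulExtend_tmul_one_mul _ _)]
  have hK : mulExtend includeLeft K₁ = mulExtend includeLeft K₂ := by
    refine LinearMap.ext fun t => ?_
    obtain ⟨x, rfl⟩ := hfree t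
    rw [← LinearMap.comp_apply, hχ, h, ← hχ, LinearMap.comp_apply]
  ext a
  simpa [← Algebra.TensorProduct.one_def] using LinearMap.congr_fun hK (1 ⊗ₜ a)

lemma isAdCovariant_of_isEquivariant_coactConv (hcoassoc : IsCoassociative ΔR)
    (hmul : ∀ u v : P, ΔR (u * v) = ΔR u * ΔR v) (hfree : Function.Surjective (chiMap k A P ΔR))
    {f : A →ₗ[k] P} (hf : IsEquivariant ΔR (coactConv ΔR f)) : IsAdCovariant ΔR f := by
  rw [isAdCovariant_iff_semiconjBy]
  refine WithConv.ext (eq_of_mulExtend_comp_coaction ΔR hfree (LinearMap.ext fun u => ?_))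
  rw [LinearMap.comp_apply, LinearMap.comp_apply, ← coaction_coactConv ΔR hcoassoc hmul,
    ← map_coactConv_coaction ΔR hcoassoc]
  exact hf u

lemma bijective_coactConv (hcounit : IsCounital ΔR) (hcoassoc : IsCoassociative ΔR)
    (hone : ΔR 1 = 1) (hmul : ∀ u v : P, ΔR (u * v) = ΔR u * ΔR v) {f g : A →ₗ[k] P}
    (hfg : toConv f * toConv g = 1) (hgf : toConv g * toConv f = 1) (hf : IsAdCovariant ΔR f) :
    Function.Bijective (coactConv ΔR f) := by
  have hinv {φ ψ : A →ₗ[k] P} (hψ : IsAdCovariant ΔR ψ) (h : toConv ψ * toConv φ = 1) :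
      Function.LeftInverse (coactConv ΔR φ) (coactConv ΔR ψ) := fun u => by
    rw [← LinearMap.comp_apply, coactConv_comp_coactConv ΔR hcoassoc φ
      (isEquivariant_coactConv ΔR hcoassoc hmul hψ), h, coactConv_convOne ΔR hcounit,
      LinearMap.id_apply]
  exact ⟨(hinv hf hfg).injective,
    (hinv (isAdCovariant_of_conv_inverse ΔR hone hmul hfg hgf hf) hgf).surjective⟩

lemma ker_chiMap_le_PB2P (hcounit : IsCounital ΔR)
    (hexact : LinearMap.ker (chiMap k A P ΔR) ⊓ LinearMap.ker (LinearMap.mul' k P)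
      = PB2P k A P ΔR) :
    LinearMap.ker (chiMap k A P ΔR) ≤ PB2P k A P ΔR := by
  have hmul' : mul' k P
      = mulExtend (AlgHom.id k P) (1 : WithConv (A →ₗ[k] P)).ofConv ∘ₗ chiMap k A P ΔR := by
    rw [chiMap_eq_mulExtend, comp_mulExtend_includeLeft _ _ (mulExtend_tmul_one_mul _ _)]
    change _ = mulExtend _ (coactConv ΔR _)
    rw [coactConv_convOne ΔR hcounit]
    ext
    simp
  rw [← hexact, le_inf_iff, hmul']
  exact ⟨le_rfl, ker_le_ker_comp _ _⟩

lemma PB2P_le_ker_mulExtend {F : P →ₗ[k] P} (hF : IsCoinvariantLinear ΔR F) :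
    PB2P k A P ΔR ≤ LinearMap.ker (mulExtend (AlgHom.id k P) F) := by
  rw [PB2P, Submodule.span_le]
  rintro _ ⟨u, v, x, ⟨hxB, hxμ⟩, rfl⟩
  have key : BBsub k A P ΔR ≤ LinearMap.ker
      (mulExtend (AlgHom.id k P) F ∘ₗ TensorProduct.map (mulLeft k u) (mulRight k v)
        - mulRight k (F v) ∘ₗ mulLeft k u ∘ₗ mul' k P) := by
    rw [BBsub, Submodule.span_le]
    rintro _ ⟨b, c, -, hc, rfl⟩
    simp [hF c hc, mul_assoc]
  simpa [sub_eq_zero, LinearMap.mem_ker.mp hxμ] using key hxB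

lemma transConv_coactConv (σ : A →ₗ[k] P ⊗[k] P)
    (hσ : ∀ a : A, chiMap k A P ΔR (σ a) = (1 : P) ⊗ₜ a) (f : A →ₗ[k] P) :
    transConv σ (coactConv ΔR f) = f := by
  have hχ : mulExtend (AlgHom.id k P) (coactConv ΔR f)
      = mulExtend (AlgHom.id k P) f ∘ₗ chiMap k A P ΔR := by
    rw [chiMap_eq_mulExtend, comp_mulExtend_includeLeft _ _ (mulExtend_tmul_one_mul _ _)]
    rfl
  ext a
  simp [transConv, hχ, hσ]

/-- `s(p ⊗ a) = (p ⊗ 1) σ(a)` is a section of `χ`, and `s(Δ_R u) - 1 ⊗ u ∈ ker χ ⊆ P B² P` is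
killed by `u ⊗ v ↦ u F(v)`. -/
lemma coactConv_transConv (hker : LinearMap.ker (chiMap k A P ΔR) ≤ PB2P k A P ΔR)
    (σ : A →ₗ[k] P ⊗[k] P) (hσ : ∀ a : A, chiMap k A P ΔR (σ a) = (1 : P) ⊗ₜ a)
    {F : P →ₗ[k] P} (hF : IsCoinvariantLinear ΔR F) :
    coactConv ΔR (transConv σ F) = F := by
  have hsection : chiMap k A P ΔR ∘ₗ mulExtend includeLeft σ = LinearMap.id := by
    rw [chiMap_eq_mulExtend, comp_mulExtend_includeLeft _ _ (mulExtend_tmul_one_mul _ _),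
      ← chiMap_eq_mulExtend]
    ext
    simp [hσ]
  have hF' : mulExtend (AlgHom.id k P) F ∘ₗ mulExtend includeLeft σ
      = mulExtend (AlgHom.id k P) (transConv σ F) :=
    comp_mulExtend_includeLeft _ _ (mulExtend_tmul_one_mul _ _) σ
  ext u
  have hfiber : mulExtend includeLeft σ (ΔR u) - 1 ⊗ₜ u ∈ LinearMap.ker (chiMap k A P ΔR) := by
    rw [LinearMap.mem_ker, map_sub, ← LinearMap.comp_apply, hsection, chiMap_eq_mulExtend]
    simp [← Algebra.TensorProduct.one_def]
  have := LinearMap.mem_ker.mp (PB2P_le_ker_mulExtend ΔR hF (hker hfiber))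
  rw [map_sub, sub_eq_zero, ← LinearMap.comp_apply, hF'] at this
  simpa [coactConv] using this

lemma transConv_apply_one (hone : ΔR 1 = 1)
    (hker : LinearMap.ker (chiMap k A P ΔR) ≤ PB2P k A P ΔR)
    (σ : A →ₗ[k] P ⊗[k] P) (hσ : ∀ a : A, chiMap k A P ΔR (σ a) = (1 : P) ⊗ₜ a)
    {F : P →ₗ[k] P} (hF : IsCoinvariantLinear ΔR F) : transConv σ F 1 = F 1 := by
  rw [← coactConv_apply_one ΔR hone, coactConv_transConv ΔR hker σ hσ hF]

lemma isAdCovariant_transConv (hcoassoc : IsCoassociative ΔR)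
    (hmul : ∀ u v : P, ΔR (u * v) = ΔR u * ΔR v) (hfree : Function.Surjective (chiMap k A P ΔR))
    (hker : LinearMap.ker (chiMap k A P ΔR) ≤ PB2P k A P ΔR)
    (σ : A →ₗ[k] P ⊗[k] P) (hσ : ∀ a : A, chiMap k A P ΔR (σ a) = (1 : P) ⊗ₜ a)
    {F : P →ₗ[k] P} (hF : IsCoinvariantLinear ΔR F) (hFeq : IsEquivariant ΔR F) :
    IsAdCovariant ΔR (transConv σ F) := by
  refine isAdCovariant_of_isEquivariant_coactConv ΔR hcoassoc hmul hfree ?_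
  rwa [coactConv_transConv ΔR hker σ hσ hF]

lemma transConv_mul_transConv (hcoassoc : IsCoassociative ΔR)
    (hker : LinearMap.ker (chiMap k A P ΔR) ≤ PB2P k A P ΔR)
    (σ : A →ₗ[k] P ⊗[k] P) (hσ : ∀ a : A, chiMap k A P ΔR (σ a) = (1 : P) ⊗ₜ a)
    {F G : P →ₗ[k] P} (hF : IsCoinvariantLinear ΔR F) (hFeq : IsEquivariant ΔR F)
    (hG : IsCoinvariantLinear ΔR G) :
    toConv (transConv σ F) * toConv (transConv σ G) = toConv (transConv σ (G ∘ₗ F)) := by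
  have hF' := coactConv_transConv ΔR hker σ hσ hF
  rw [← hF'] at hFeq
  apply WithConv.ext
  calc (toConv (transConv σ F) * toConv (transConv σ G)).ofConv
      = transConv σ (coactConv ΔR (toConv (transConv σ F) * toConv (transConv σ G)).ofConv) :=
        (transConv_coactConv ΔR σ hσ _).symm
    _ = transConv σ (G ∘ₗ F) := by
      rw [← coactConv_comp_coactConv ΔR hcoassoc _ hFeq, coactConv_transConv ΔR hker σ hσ hG, hF']

lemma transConv_conv_inverse (hcounit : IsCounital ΔR) (hcoassoc : IsCoassociative ΔR)
    (hker : LinearMap.ker (chiMap k A P ΔR) ≤ PB2P k A P ΔR)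
    (σ : A →ₗ[k] P ⊗[k] P) (hσ : ∀ a : A, chiMap k A P ΔR (σ a) = (1 : P) ⊗ₜ a)
    (F : P ≃ₗ[k] P) (hF : IsCoinvariantLinear ΔR F.toLinearMap)
    (hFeq : IsEquivariant ΔR F.toLinearMap) :
    toConv (transConv σ F) * toConv (transConv σ F.symm) = 1 ∧
      toConv (transConv σ F.symm) * toConv (transConv σ F) = 1 := by
  have hF' : IsCoinvariantLinear ΔR F.symm.toLinearMap := fun b hb u =>
    F.injective (by simpa using (hF b hb (F.symm u)).symm)
  have hFeq' : IsEquivariant ΔR F.symm.toLinearMap := fun u => by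
    have := hFeq (F.symm u)
    simp only [LinearEquiv.coe_coe, LinearEquiv.apply_symm_apply] at this
    rw [this, TensorProduct.map_map]
    simp
  have hid : transConv σ LinearMap.id = (1 : WithConv (A →ₗ[k] P)).ofConv := by
    rw [← coactConv_convOne ΔR hcounit, transConv_coactConv ΔR σ hσ]
  rw [transConv_mul_transConv ΔR hcoassoc hker σ hσ hF hFeq hF',
    transConv_mul_transConv ΔR hcoassoc hker σ hσ hF' hFeq' hF, F.symm_comp, F.comp_symm, hid]
  exact ⟨rfl, rfl⟩

end Coaction

end QuantumPrincipalBundle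

open QuantumPrincipalBundle

/-- Proposition 5.2: vertical automorphisms of a quantum principal bundle `P(B,A)`
(left `B`-module automorphisms `F` with `F(1) = 1` intertwining `Δ_R`) are in
bijective correspondence with convolution invertible unital `Ad`-covariant maps
`f : A → P`; the correspondence is `f ↦ id * f` with inverse
`F ↦ mult ∘ (id ⊗_B F) ∘ τ` (here `σ` is any lift of the translation map `τ`). -/
theorem vertical_automorphisms_equiv_ad_covariant_maps
    (ΔR : P →ₗ[k] P ⊗[k] A)
    (hcounit : ∀ u : P, TensorProduct.map LinearMap.id Coalgebra.counit (ΔR u) = u ⊗ₜ (1 : k))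
    (hcoassoc : ∀ u : P, TensorProduct.map ΔR LinearMap.id (ΔR u)
      = (TensorProduct.assoc k P A A).symm (TensorProduct.map LinearMap.id Coalgebra.comul (ΔR u)))
    (hone : ΔR 1 = 1)
    (hmul : ∀ u v : P, ΔR (u * v) = ΔR u * ΔR v)
    (hfree : Function.Surjective (chiMap k A P ΔR))
    (hexact : LinearMap.ker (chiMap k A P ΔR) ⊓ LinearMap.ker (LinearMap.mul' k P)
      = PB2P k A P ΔR)
    (σ : A →ₗ[k] P ⊗[k] P)
    (hσ : ∀ a : A, chiMap k A P ΔR (σ a) = (1 : P) ⊗ₜ a) :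
    ∃ e : {f : A →ₗ[k] P // f 1 = 1 ∧
            (∃ g, conv k f g = convOne k ∧ conv k g f = convOne k) ∧
            ∀ a : A, ΔR (f a) = TensorProduct.map f LinearMap.id (adCoaction k A a)} ≃
          {F : P →ₗ[k] P // Function.Bijective F ∧ F 1 = 1 ∧
            (∀ b : P, ΔR b = b ⊗ₜ 1 → ∀ u : P, F (b * u) = b * F u) ∧
            ∀ u : P, ΔR (F u) = TensorProduct.map F LinearMap.id (ΔR u)},
      (∀ f (u : P), ((e f) : P →ₗ[k] P) u
        = LinearMap.mul' k P (TensorProduct.map LinearMap.id f.1 (ΔR u))) ∧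
      (∀ F (a : A), ((e.symm F) : A →ₗ[k] P) a
        = LinearMap.mul' k P (TensorProduct.map LinearMap.id F.1 (σ a))) := by
  have hker := ker_chiMap_le_PB2P ΔR hcounit hexact
  refine ⟨{ toFun := fun f => ⟨coactConv ΔR f.1, ?_⟩
            invFun := fun F => ⟨transConv σ F.1, ?_⟩
            left_inv := fun f => Subtype.ext (transConv_coactConv ΔR σ hσ f.1)
            right_inv := fun F => Subtype.ext (coactConv_transConv ΔR hker σ hσ F.2.2.2.1) },
    fun _ _ => rfl, fun _ _ => rfl⟩
  · obtain ⟨hf1, ⟨g, hfg, hgf⟩, hf⟩ := f.2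
    exact ⟨bijective_coactConv ΔR hcounit hcoassoc hone hmul (conv_eq_convOne_iff.1 hfg)
        (conv_eq_convOne_iff.1 hgf) hf,
      (coactConv_apply_one ΔR hone _).trans hf1, isCoinvariantLinear_coactConv ΔR hmul _,
      isEquivariant_coactConv ΔR hcoassoc hmul hf⟩
  · obtain ⟨hbij, hF1, hF, hFeq⟩ := F.2
    have hinv := transConv_conv_inverse ΔR hcounit hcoassoc hker σ hσ
      (.ofBijective F.1 hbij) hF hFeq
    exact ⟨(transConv_apply_one ΔR hone hker σ hσ hF).trans hF1,
      ⟨_, conv_eq_convOne_iff.2 hinv.1, conv_eq_convOne_iff.2 hinv.2⟩,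
      isAdCovariant_transConv ΔR hcoassoc hmul hfree hker σ hσ hF hFeq⟩
end
end

section
/- Let P(B,A,Φ) be a trivial quantum principal bundle. The map γ ↦ Φ⁻¹ * γ * Φ is a group isomorphism from the gauge group 𝒜(B) (convolution invertible maps γ : A → B with γ(1)=1, under convolution) onto 𝒜(P) (convolution invertible maps f : A → P with f(1)=1 and Δ_R f = (f ⊗ id) Ad), with inverse f ↦ Φ * f * Φ⁻¹. -/
open TensorProduct

noncomputable section

variable (k : Type*) [Field k]

variable (A P : Type*) [Ring A] [HopfAlgebra k A] [Ring P] [Algebra k P]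

/-! In the convolution monoid of linear maps `A → P ⊗ A`, write `E f = f(-) ⊗ 1` and
`t = 1 ⊗ id`, a unit with inverse `1 ⊗ S`. Both `Δ_R ∘ -` and `E` are monoid homomorphisms out
of the convolution monoid of maps `A → P`, and three conditions become identities there: `γ` is
`B`-valued iff `Δ_R ∘ γ = E γ`, `f` is `Ad`-covariant iff `Δ_R ∘ f = t⁻¹ (E f) t`, and `Φ`
intertwines the coactions iff `Δ_R ∘ Φ = (E Φ) t`. Applying `Δ_R ∘ -` to `Φ⁻¹ γ Φ` therefore
conjugates the first identity into the second, and the rest is group theory of units. -/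

open WithConv

section Conjugation

variable {M N : Type*} [Monoid M] [Monoid N]

theorem MonoidHom.map_eq_map_of_inverse {D E : M →* N} {x y : M} (hxy : x * y = 1)
    (hyx : y * x = 1) (h : D x = E x) : D y = E y :=
  calc D y = D y * E (x * y) := by rw [hxy, map_one, mul_one]
    _ = D (y * x) * E y := by rw [map_mul, map_mul, h, mul_assoc]
    _ = E y := by rw [hyx, map_one, one_mul]

theorem MonoidHom.map_units_inv_eq_one {Q : Type*} [Monoid Q] {ev : M →* Q} {φ : Mˣ}
    (hev : ev φ = 1) : ev ↑φ⁻¹ = 1 := by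
  rw [← Units.coe_map_inv, show Units.map ev φ = 1 from Units.ext hev, inv_one, Units.val_one]

theorem MonoidHom.conj_eq_twisted_iff {D E : M →* N} {φ : Mˣ} {t : Nˣ}
    (hφ : D φ = E φ * t) (x : M) :
    D (↑φ⁻¹ * x * φ) = ↑t⁻¹ * E (↑φ⁻¹ * x * φ) * t ↔ D x = E x := by
  set u : Nˣ := Units.map E φ * t
  have hDφ : Units.map D φ = u := Units.ext hφ
  have hD : ∀ y, D (↑φ⁻¹ * y * φ) = ↑u⁻¹ * D y * u := fun y => by
    rw [map_mul, map_mul, ← Units.coe_map_inv, ← Units.coe_map D φ, hDφ]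
  have hE : ∀ y, ↑t⁻¹ * E (↑φ⁻¹ * y * φ) * t = ↑u⁻¹ * E y * u := fun y => by
    simp only [u, map_mul, ← Units.coe_map_inv, mul_inv_rev, Units.val_mul, Units.coe_map,
      mul_assoc]
  rw [hD, hE, Units.mul_left_inj, Units.mul_right_inj]

end Conjugation

section GaugeSets

variable {M N Q : Type*} [Monoid M] [Monoid N] [Monoid Q]

/- With `M` the convolution maps `A → P`, `ev` evaluation at `1`, `D = Δ_R ∘ -` and
`E = (-) ⊗ 1`, these are the gauge groups `𝒜(B)` and, for `t = 1 ⊗ id`, `𝒜(P)`. -/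

def coinvariantGauge (ev : M →* Q) (D E : M →* N) : Set M :=
  {x | ev x = 1 ∧ IsUnit x ∧ D x = E x}

def covariantGauge (ev : M →* Q) (D E : M →* N) (t : Nˣ) : Set M :=
  {x | ev x = 1 ∧ IsUnit x ∧ D x = ↑t⁻¹ * E x * t}

variable {ev : M →* Q} {D E : M →* N} {φ : Mˣ} {t : Nˣ}

theorem mapsTo_conj_coinvariantGauge (hev : ev φ = 1) (hφ : D φ = E φ * t) :
    Set.MapsTo (fun x : M => ↑φ⁻¹ * x * ↑φ) (coinvariantGauge ev D E)
      (covariantGauge ev D E t) := by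
  rintro x ⟨hx1, hxu, hx⟩
  refine ⟨?_, (φ⁻¹.isUnit.mul hxu).mul φ.isUnit, ?_⟩
  · simp [hev, MonoidHom.map_units_inv_eq_one hev, hx1]
  · exact (MonoidHom.conj_eq_twisted_iff hφ x).mpr hx

theorem mapsTo_conj_covariantGauge (hev : ev φ = 1) (hφ : D φ = E φ * t) :
    Set.MapsTo (fun x : M => ↑φ * x * ↑φ⁻¹) (covariantGauge ev D E t)
      (coinvariantGauge ev D E) := by
  rintro x ⟨hx1, hxu, hx⟩
  refine ⟨?_, (φ.isUnit.mul hxu).mul φ⁻¹.isUnit, ?_⟩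
  · simp [hev, MonoidHom.map_units_inv_eq_one hev, hx1]
  · rw [← MonoidHom.conj_eq_twisted_iff hφ]
    simpa [mul_assoc] using hx

end GaugeSets

section ConvolutionHoms

open Coalgebra

variable {R C B B' : Type*} [CommSemiring R] [AddCommMonoid C] [Module R C] [Coalgebra R C]
  [Semiring B] [Algebra R B] [Semiring B'] [Algebra R B']

def AlgHom.convCompLeft (j : B →ₐ[R] B') :
    WithConv (C →ₗ[R] B) →* WithConv (C →ₗ[R] B') where
  toFun f := toConv (j.toLinearMap ∘ₗ f.ofConv)
  map_one' := by ext; simp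
  map_mul' f g := WithConv.ext (LinearMap.algHom_comp_convMul_distrib j f g)

@[simp] theorem AlgHom.convCompLeft_apply (j : B →ₐ[R] B') (f : WithConv (C →ₗ[R] B))
    (c : C) : j.convCompLeft f c = j (f c) := rfl

def IsGroupLikeElem.convEval {c : C} (hc : IsGroupLikeElem R c) :
    WithConv (C →ₗ[R] B) →* B where
  toFun f := f c
  map_one' := by simp [hc]
  map_mul' f g := by simp [hc]

end ConvolutionHoms

section HopfAlgebra

open Coalgebra Algebra.TensorProduct

variable {R H P : Type*} [CommSemiring R] [Semiring H] [HopfAlgebra R H]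
  [Semiring P] [Algebra R P]

variable (R H P) in
def includeLeftConv : WithConv (H →ₗ[R] P) →* WithConv (H →ₗ[R] P ⊗[R] H) :=
  (includeLeft : P →ₐ[R] P ⊗[R] H).convCompLeft

@[simp] theorem includeLeftConv_apply (f : WithConv (H →ₗ[R] P)) (a : H) :
    includeLeftConv R H P f a = f a ⊗ₜ 1 := rfl

variable (R H P) in
def evalOneConv : WithConv (H →ₗ[R] P) →* P :=
  IsGroupLikeElem.one.convEval

@[simp] theorem evalOneConv_apply (f : WithConv (H →ₗ[R] P)) : evalOneConv R H P f = f 1 := rfl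

def HopfAlgebra.idConvUnit : (WithConv (H →ₗ[R] H))ˣ :=
  ⟨toConv LinearMap.id, toConv (HopfAlgebra.antipode R), LinearMap.id_mul_antipode,
    LinearMap.antipode_mul_id⟩

variable (R H P) in
def includeRightConvUnit : (WithConv (H →ₗ[R] P ⊗[R] H))ˣ :=
  Units.map (includeRight : H →ₐ[R] P ⊗[R] H).convCompLeft HopfAlgebra.idConvUnit

theorem includeLeftConv_mul_includeRightConvUnit (f : H →ₗ[R] P) :
    includeLeftConv R H P (toConv f) * includeRightConvUnit R H P
      = toConv (TensorProduct.map f LinearMap.id ∘ₗ comul) := by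
  ext a
  simp [includeLeftConv, includeRightConvUnit, HopfAlgebra.idConvUnit, (ℛ R a).convMul_apply,
    ← (ℛ R a).eq]

end HopfAlgebra

section TrivialBundle

open Coalgebra Algebra.TensorProduct

variable {k A P}

theorem conv_eq_convOne_iff {C B : Type*} [AddCommMonoid C] [Module k C] [Coalgebra k C]
    [Semiring B] [Algebra k B] {f g : C →ₗ[k] B} :
    conv k f g = convOne k ↔ toConv f * toConv g = 1 :=
  toConv_injective.eq_iff.symm

theorem isUnit_toConv_iff {C B : Type*} [AddCommMonoid C] [Module k C] [Coalgebra k C]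
    [Semiring B] [Algebra k B] {f : C →ₗ[k] B} :
    IsUnit (toConv f) ↔ ∃ g, conv k f g = convOne k ∧ conv k g f = convOne k := by
  simp only [isUnit_iff_exists, conv_eq_convOne_iff]
  exact ⟨fun ⟨g, h⟩ => ⟨g.ofConv, h⟩, fun ⟨g, h⟩ => ⟨toConv g, h⟩⟩

theorem map_comp_adCoaction (f : A →ₗ[k] P) :
    toConv (TensorProduct.map f LinearMap.id ∘ₗ adCoaction k A)
      = ↑(includeRightConvUnit k A P)⁻¹ *
        (includeLeftConv k A P (toConv f) * includeRightConvUnit k A P) := by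
  rw [includeLeftConv_mul_includeRightConvUnit]
  ext a
  simp only [adCoaction, LinearMap.coe_comp, LinearEquiv.coe_coe, Function.comp_apply,
    ← (ℛ k a).eq, map_sum, TensorProduct.map_tmul, LinearMap.id_coe, id_eq,
    includeRightConvUnit, HopfAlgebra.idConvUnit, Units.map_mk, Units.inv_mk,
    (ℛ k a).convMul_apply, AlgHom.convCompLeft_apply, includeRight_apply]
  refine Finset.sum_congr rfl fun i _ => ?_
  set b : A := (ℛ k a).right i
  simp [← (ℛ k b).eq, TensorProduct.tmul_sum, Finset.mul_sum]

variable (ΔR : P →ₐ[k] P ⊗[k] A)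

theorem coinvariant_iff (γ : A →ₗ[k] P) :
    (∀ a, ΔR (γ a) = γ a ⊗ₜ 1) ↔
      ΔR.convCompLeft (toConv γ) = includeLeftConv k A P (toConv γ) := by
  simp [WithConv.ext_iff, LinearMap.ext_iff]

theorem adCovariant_iff (f : A →ₗ[k] P) :
    (∀ a, ΔR (f a) = TensorProduct.map f LinearMap.id (adCoaction k A a)) ↔
      ΔR.convCompLeft (toConv f) = ↑(includeRightConvUnit k A P)⁻¹ *
        (includeLeftConv k A P (toConv f) * includeRightConvUnit k A P) := by
  rw [← map_comp_adCoaction]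
  simp [WithConv.ext_iff, LinearMap.ext_iff]

theorem covariant_iff (Φ : A →ₗ[k] P) :
    (∀ a, ΔR (Φ a) = TensorProduct.map Φ LinearMap.id (comul a)) ↔
      ΔR.convCompLeft (toConv Φ) =
        includeLeftConv k A P (toConv Φ) * includeRightConvUnit k A P := by
  rw [includeLeftConv_mul_includeRightConvUnit]
  simp [WithConv.ext_iff, LinearMap.ext_iff]

theorem mem_coinvariantGauge_iff (γ : A →ₗ[k] P) :
    toConv γ ∈ coinvariantGauge (evalOneConv k A P) ΔR.convCompLeft (includeLeftConv k A P) ↔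
      γ 1 = 1 ∧ (∀ a, ΔR (γ a) = γ a ⊗ₜ 1) ∧
        ∃ γ' : A →ₗ[k] P, (∀ a, ΔR (γ' a) = γ' a ⊗ₜ 1) ∧
          conv k γ γ' = convOne k ∧ conv k γ' γ = convOne k := by
  simp only [coinvariant_iff, conv_eq_convOne_iff]
  constructor
  · rintro ⟨h1, ⟨u, hu⟩, hγ⟩
    have hinv : ΔR.convCompLeft ↑u⁻¹ = includeLeftConv k A P ↑u⁻¹ :=
      MonoidHom.map_eq_map_of_inverse u.mul_inv u.inv_mul (hu ▸ hγ)
    exact ⟨h1, hγ, (↑u⁻¹ : WithConv _).ofConv, hinv, hu ▸ u.mul_inv, hu ▸ u.inv_mul⟩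
  · rintro ⟨h1, hγ, γ', -, h, h'⟩
    exact ⟨h1, isUnit_iff_exists.mpr ⟨toConv γ', h, h'⟩, hγ⟩

theorem mem_covariantGauge_iff (f : A →ₗ[k] P) :
    toConv f ∈ covariantGauge (evalOneConv k A P) ΔR.convCompLeft (includeLeftConv k A P)
        (includeRightConvUnit k A P) ↔
      f 1 = 1 ∧ (∃ g, conv k f g = convOne k ∧ conv k g f = convOne k) ∧
        ∀ a, ΔR (f a) = TensorProduct.map f LinearMap.id (adCoaction k A a) := by
  rw [covariantGauge, Set.mem_ofPred_eq, isUnit_toConv_iff, mul_assoc, ← adCovariant_iff,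
    evalOneConv_apply]

end TrivialBundle

theorem gauge_group_iso_trivial_bundle
    (ΔR : P →ₗ[k] P ⊗[k] A)
    (hone : ΔR 1 = 1)
    (hmul : ∀ u v : P, ΔR (u * v) = ΔR u * ΔR v)
    (Φ Φinv : A →ₗ[k] P)
    (hΦ1 : Φ 1 = 1)
    (hint : ∀ a : A, ΔR (Φ a) = TensorProduct.map Φ LinearMap.id (Coalgebra.comul a))
    (hinv1 : conv k Φ Φinv = convOne k) (hinv2 : conv k Φinv Φ = convOne k) :
    Set.BijOn (fun γ : A →ₗ[k] P => conv k (conv k Φinv γ) Φ)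
      {γ : A →ₗ[k] P | γ 1 = 1 ∧ (∀ a : A, ΔR (γ a) = γ a ⊗ₜ 1) ∧
        ∃ γ' : A →ₗ[k] P, (∀ a : A, ΔR (γ' a) = γ' a ⊗ₜ 1) ∧
          conv k γ γ' = convOne k ∧ conv k γ' γ = convOne k}
      {f : A →ₗ[k] P | f 1 = 1 ∧
        (∃ g, conv k f g = convOne k ∧ conv k g f = convOne k) ∧
        ∀ a : A, ΔR (f a) = TensorProduct.map f LinearMap.id (adCoaction k A a)} ∧
    Set.InvOn (fun f : A →ₗ[k] P => conv k (conv k Φ f) Φinv)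
      (fun γ : A →ₗ[k] P => conv k (conv k Φinv γ) Φ)
      {γ : A →ₗ[k] P | γ 1 = 1 ∧ (∀ a : A, ΔR (γ a) = γ a ⊗ₜ 1) ∧
        ∃ γ' : A →ₗ[k] P, (∀ a : A, ΔR (γ' a) = γ' a ⊗ₜ 1) ∧
          conv k γ γ' = convOne k ∧ conv k γ' γ = convOne k}
      {f : A →ₗ[k] P | f 1 = 1 ∧
        (∃ g, conv k f g = convOne k ∧ conv k g f = convOne k) ∧
        ∀ a : A, ΔR (f a) = TensorProduct.map f LinearMap.id (adCoaction k A a)} ∧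
    (∀ γ₁ γ₂ : A →ₗ[k] P,
      conv k (conv k Φinv (conv k γ₁ γ₂)) Φ
        = conv k (conv k (conv k Φinv γ₁) Φ) (conv k (conv k Φinv γ₂) Φ)) := by
  let Δ : P →ₐ[k] P ⊗[k] A := AlgHom.ofLinearMap ΔR hone hmul
  let φ : (WithConv (A →ₗ[k] P))ˣ :=
    ⟨toConv Φ, toConv Φinv, conv_eq_convOne_iff.mp hinv1, conv_eq_convOne_iff.mp hinv2⟩
  have hφ := (covariant_iff Δ Φ).mp hint
  have hInv : ∀ s t, Set.InvOn (fun f : A →ₗ[k] P => conv k (conv k Φ f) Φinv)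
      (fun γ : A →ₗ[k] P => conv k (conv k Φinv γ) Φ) s t := fun _ _ =>
    ⟨fun γ _ => congrArg ofConv (show ↑φ * (↑φ⁻¹ * toConv γ * ↑φ) * ↑φ⁻¹ = toConv γ by
        simp [mul_assoc]),
      fun f _ => congrArg ofConv (show ↑φ⁻¹ * (↑φ * toConv f * ↑φ⁻¹) * ↑φ = toConv f by
        simp [mul_assoc])⟩
  refine ⟨(hInv _ _).bijOn (fun γ hγ => ?_) (fun f hf => ?_), hInv _ _, fun γ₁ γ₂ => ?_⟩
  · exact (mem_covariantGauge_iff Δ _).mp <| mapsTo_conj_coinvariantGauge (φ := φ) hΦ1 hφ <|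
      (mem_coinvariantGauge_iff Δ γ).mpr hγ
  · exact (mem_coinvariantGauge_iff Δ _).mp <| mapsTo_conj_covariantGauge (φ := φ) hΦ1 hφ <|
      (mem_covariantGauge_iff Δ f).mpr hf
  · exact congrArg ofConv (show ↑φ⁻¹ * (toConv γ₁ * toConv γ₂) * ↑φ
      = (↑φ⁻¹ * toConv γ₁ * ↑φ) * (↑φ⁻¹ * toConv γ₂ * ↑φ) by simp [mul_assoc])
end
end
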